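/- Let d, k_d, γ, φ₁ be positive real constants. Let x : ℝ → ℝ be a differentiable function with x(t) > φ₁ for all t ≥ 0, and suppose that for all t ≥ 0 the derivative satisfies x'(t) = -d·x(t) + F(t) + G(t), where F(t) ≥ 0 and G(t) ≥ 0. Define the delay τ(t) = γ·x(t)^(-k_d). Then for every t ≥ 0 the derivative of τ satisfies τ'(t) < d·k_d·γ·φ₁^(-k_d); consequently, for any constant φ₂ > d·k_d·γ·φ₁^(-k_d), one has 1 - τ'(t) > 1 - φ₂ for all t ≥ 0. -/
import Mathlib


open Real

theorem stmt_0 (d kd γ φ₁ : ℝ) (hd : 0 < d) (hkd : 0 < kd) (hγ : 0 < γ)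
    (hφ₁ : 0 < φ₁) (x F G : ℝ → ℝ) (hx : Differentiable ℝ x)
    (hxpos : ∀ t : ℝ, 0 ≤ t → φ₁ < x t)
    (hF : ∀ t : ℝ, 0 ≤ t → 0 ≤ F t) (hG : ∀ t : ℝ, 0 ≤ t → 0 ≤ G t)
    (hdyn : ∀ t : ℝ, 0 ≤ t → deriv x t = -d * x t + F t + G t)
    (τ : ℝ → ℝ) (hτ : ∀ t, τ t = γ * x t ^ (-kd)) :
    (∀ t : ℝ, 0 ≤ t → deriv τ t < d * kd * γ * φ₁ ^ (-kd)) ∧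
      ∀ φ₂ : ℝ, d * kd * γ * φ₁ ^ (-kd) < φ₂ →
        ∀ t : ℝ, 0 ≤ t → 1 - φ₂ < 1 - deriv τ t := by
  have key : ∀ t : ℝ, 0 ≤ t → deriv τ t < d * kd * γ * φ₁ ^ (-kd) := by
    intro t ht
    have hxt : 0 < x t := hφ₁.trans (hxpos t ht)
    have hderiv : HasDerivAt τ
        (γ * (deriv x t * (-kd) * x t ^ (-kd - 1))) t := by
      have h1 : HasDerivAt x (deriv x t) t := (hx t).hasDerivAt
      have h2 := (h1.rpow_const (p := -kd) (Or.inl hxt.ne')).const_mul γ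
      exact h2.congr_of_eventuallyEq (by filter_upwards with s using hτ s)
    rw [hderiv.deriv, hdyn t ht]
    have hpow : x t ^ (-kd - 1) * x t = x t ^ (-kd) := by
      nth_rewrite 2 [← Real.rpow_one (x t)]
      rw [← Real.rpow_add hxt]; ring_nf
    have hxp : 0 < x t ^ (-kd - 1) := Real.rpow_pos_of_pos hxt _
    have hxk : x t ^ (-kd) < φ₁ ^ (-kd) :=
      Real.rpow_lt_rpow_of_neg hφ₁ (hxpos t ht) (neg_neg_of_pos hkd)
    have hFG : 0 ≤ F t + G t := add_nonneg (hF t ht) (hG t ht)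
    nlinarith [mul_nonneg (mul_nonneg hγ.le hkd.le) (mul_nonneg hFG hxp.le),
      mul_lt_mul_of_pos_left hxk (mul_pos (mul_pos hd hkd) hγ), hpow]
  refine ⟨key, fun φ₂ hφ₂ t ht => by linarith [key t ht]⟩
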